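/- arXiv:1007.3652 — 2 statements merged into one kernel-verified Lean document; each statement's English description precedes it below -/
import Mathlib

section
/- Let X be a reflexive Banach space and S, T : X ⇉ X* maximal monotone operators, p ∈ X, p* ∈ X*, f_S ∈ F_S, f_T ∈ F_T. If there exist ū ∈ X, ū* ∈ X* such that (f_S + f̂_T(· − p, · − p*))*(p*, p) = f_S*(p* − ū*, p − ū) + f̂_T*(ū*, ū) + ⟨p*, ū⟩ + ⟨ū*, p⟩, then f_S*(p* − ū*, p − ū) = ⟨p* − ū*, p − ū⟩ and f̂_T*(ū*, ū) = −⟨ū*, ū⟩, and consequently p* ∈ S(p − ū) + T(−ū). -/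
noncomputable section

open scoped Topology Pointwise

variable {X : Type*} [NormedAddCommGroup X] [NormedSpace ℝ X]

/-- The topological dual of a real normed space. -/
abbrev Dd (X : Type*) [NormedAddCommGroup X] [NormedSpace ℝ X] := StrongDual ℝ X

/-- Convexity for extended-real-valued functions. -/
def EConvexOn {E : Type*} [AddCommMonoid E] [Module ℝ E] (f : E → EReal) : Prop :=
  ∀ x y : E, ∀ a b : ℝ, 0 ≤ a → 0 ≤ b → a + b = 1 →
    f (a • x + b • y) ≤ (a : EReal) * f x + (b : EReal) * f y

/-- Monotonicity of a multivalued operator `T : X ⇉ X*`. -/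
def IsMonotoneOp (T : X → Set (Dd X)) : Prop :=
  ∀ ⦃x y xs ys⦄, xs ∈ T x → ys ∈ T y → 0 ≤ (ys - xs) (y - x)

/-- Maximal monotonicity of a multivalued operator `T : X ⇉ X*`. -/
def IsMaxMonotone (T : X → Set (Dd X)) : Prop :=
  IsMonotoneOp T ∧ ∀ x xs, (∀ y ys, ys ∈ T y → 0 ≤ (xs - ys) (x - y)) → xs ∈ T x

/-- Fenchel conjugate of a function on `X × X*`, evaluated on `X* × X`
(the space `X` identified with its image in `X**`). -/
def conj2 (F : X × Dd X → EReal) : Dd X × X → EReal :=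
  fun p => ⨆ q : X × Dd X, ((p.1 q.1 + q.2 p.2 : ℝ) : EReal) - F q

/-- Fenchel conjugate of a function on `X`. -/
def conj1 (f : X → EReal) : Dd X → EReal :=
  fun xs => ⨆ x : X, ((xs x : ℝ) : EReal) - f x

/-- `F` is a representative function of `T`: convex, lower semicontinuous,
everywhere above the duality product and coinciding with it on the graph of `T`. -/
def IsRepr (T : X → Set (Dd X)) (F : X × Dd X → EReal) : Prop :=
  EConvexOn F ∧ LowerSemicontinuous F ∧
  (∀ p : X × Dd X, ((p.2 p.1 : ℝ) : EReal) ≤ F p) ∧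
  (∀ p : X × Dd X, p.2 ∈ T p.1 → F p = ((p.2 p.1 : ℝ) : EReal))

/-- `f̂(x, x*) = f(x, -x*)`. -/
def hatF (F : X × Dd X → EReal) : X × Dd X → EReal := fun p => F (p.1, -p.2)

/-- Effective domain. -/
def edom {E : Type*} (F : E → EReal) : Set E := {p | F p ≠ ⊤}

/-- Infimal convolution. -/
def infConv {E : Type*} [AddCommGroup E] (g h : E → EReal) : E → EReal :=
  fun y => ⨅ u : E, g (y - u) + h u

/-- Exactness of the infimal convolution at a point. -/
def ExactAt {E : Type*} [AddCommGroup E] (g h : E → EReal) (y : E) : Prop :=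
  ∃ u : E, infConv g h y = g (y - u) + h u

/-- Convex subdifferential of an extended-real-valued function (empty where the
value is not finite). -/
def esubdiff (h : X → EReal) (x : X) : Set (Dd X) :=
  {xs | h x ≠ ⊤ ∧ h x ≠ ⊥ ∧ ∀ y, h x + ((xs (y - x) : ℝ) : EReal) ≤ h y}

/-- Reflexivity of a normed space. -/
def Reflexive' (X : Type*) [NormedAddCommGroup X] [NormedSpace ℝ X] : Prop :=
  Function.Surjective (NormedSpace.inclusionInDoubleDual ℝ X)

/-- The Fitzpatrick function of `T`. -/
def fitz (T : X → Set (Dd X)) : X × Dd X → EReal :=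
  fun p => ⨆ q : {q : X × Dd X // q.2 ∈ T q.1},
    ((q.1.2 p.1 + p.2 q.1.1 - q.1.2 q.1.1 : ℝ) : EReal)

/- The conjugate of a representative function `F` of a maximal monotone `T` satisfies
`conj2 F (x*, x) ≥ ⟨x*, x⟩ - ⟨x* - y*, x - y⟩` for every `(y, y*)` in the graph, so by maximality
`conj2 F (x*, x) ≥ ⟨x*, x⟩`, with equality only on the graph. At `(p* - ū*, p - ū)` for `S` and
`(ū*, -ū)` for `T` these two lower bounds, plus `⟨p*, ū⟩ + ⟨ū*, p⟩`, sum to `⟨p*, p⟩`; and since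
`f_S, f̂_T ≥ c`, the conjugate on the left of the hypothesis is at most `⟨p*, p⟩`. Hence both lower
bounds are attained. -/

lemma EReal.eq_coe_of_add_le {A B : EReal} {a b c : ℝ} (ha : (a : EReal) ≤ A)
    (hb : (b : EReal) ≤ B) (h : A + B + c ≤ ((a + b + c : ℝ) : EReal)) : A = a ∧ B = b := by
  have hA : A ≠ ⊥ := ne_bot_of_le_ne_bot (EReal.coe_ne_bot a) ha
  have hB : B ≠ ⊥ := ne_bot_of_le_ne_bot (EReal.coe_ne_bot b) hb
  induction A using EReal.rec with
  | bot => exact absurd rfl hA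
  | top =>
    rw [EReal.top_add_of_ne_bot hB, EReal.top_add_of_ne_bot (EReal.coe_ne_bot c)] at h
    exact absurd (top_le_iff.mp h) (EReal.coe_ne_top _)
  | coe A =>
    induction B using EReal.rec with
    | bot => exact absurd rfl hB
    | top =>
      rw [EReal.add_top_of_ne_bot (EReal.coe_ne_bot A),
        EReal.top_add_of_ne_bot (EReal.coe_ne_bot c)] at h
      exact absurd (top_le_iff.mp h) (EReal.coe_ne_top _)
    | coe B =>
      norm_cast at ha hb h ⊢
      constructor <;> linarith

lemma conj2_hatF (F : X × Dd X → EReal) (xs : Dd X) (x : X) :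
    conj2 (hatF F) (xs, x) = conj2 F (xs, -x) := by
  let e : X × Dd X ≃ X × Dd X := (Equiv.refl X).prodCongr (Equiv.neg (Dd X))
  refine Eq.trans ?_ (e.iSup_comp (g := fun q => ((xs q.1 + q.2 (-x) : ℝ) : EReal) - F q))
  simp [conj2, hatF, e, Prod.map]

lemma conj2_add_hatF_sub_le {F G : X × Dd X → EReal}
    (hF : ∀ q : X × Dd X, ((q.2 q.1 : ℝ) : EReal) ≤ F q)
    (hG : ∀ q : X × Dd X, ((q.2 q.1 : ℝ) : EReal) ≤ G q) (p : X) (ps : Dd X) :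
    conj2 (fun q : X × Dd X => F q + hatF G (q.1 - p, q.2 - ps)) (ps, p)
      ≤ ((ps p : ℝ) : EReal) := by
  refine iSup_le fun q => ?_
  have hsum : ((q.2 q.1 + (ps - q.2) (q.1 - p) : ℝ) : EReal)
      ≤ F q + hatF G (q.1 - p, q.2 - ps) := by
    rw [EReal.coe_add]
    exact add_le_add (hF q) (by simpa [hatF] using hG (q.1 - p, -(q.2 - ps)))
  calc ((ps q.1 + q.2 p : ℝ) : EReal) - (F q + hatF G (q.1 - p, q.2 - ps))
      ≤ ((ps q.1 + q.2 p : ℝ) : EReal) - ((q.2 q.1 + (ps - q.2) (q.1 - p) : ℝ) : EReal) :=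
        EReal.sub_le_sub le_rfl hsum
    _ = ((ps p : ℝ) : EReal) := by
        rw [← EReal.coe_sub]
        congr 1
        simp only [sub_apply, map_sub]
        ring

section MaxMonotone

variable {T : X → Set (Dd X)} {F : X × Dd X → EReal}

lemma apply_sub_le_conj2_of_mem
    (hF : ∀ q : X × Dd X, q.2 ∈ T q.1 → F q ≤ ((q.2 q.1 : ℝ) : EReal)) {y : X} {ys : Dd X}
    (hy : ys ∈ T y) (xs : Dd X) (x : X) :
    ((xs x - (xs - ys) (x - y) : ℝ) : EReal) ≤ conj2 F (xs, x) := by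
  calc ((xs x - (xs - ys) (x - y) : ℝ) : EReal)
        = ((xs y + ys x : ℝ) : EReal) - ((ys y : ℝ) : EReal) := by
        rw [← EReal.coe_sub]
        congr 1
        simp only [sub_apply, map_sub]
        ring
    _ ≤ ((xs y + ys x : ℝ) : EReal) - F (y, ys) := EReal.sub_le_sub le_rfl (hF (y, ys) hy)
    _ ≤ conj2 F (xs, x) :=
        le_iSup (fun q : X × Dd X => ((xs q.1 + q.2 x : ℝ) : EReal) - F q) (y, ys)

lemma IsMaxMonotone.mem_of_conj2_le (hT : IsMaxMonotone T)
    (hF : ∀ q : X × Dd X, q.2 ∈ T q.1 → F q ≤ ((q.2 q.1 : ℝ) : EReal)) {xs : Dd X} {x : X}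
    (h : conj2 F (xs, x) ≤ ((xs x : ℝ) : EReal)) : xs ∈ T x := by
  refine hT.2 x xs fun y ys hy => ?_
  have := (apply_sub_le_conj2_of_mem hF hy xs x).trans h
  norm_cast at this
  linarith

lemma IsMaxMonotone.apply_le_conj2 (hT : IsMaxMonotone T)
    (hF : ∀ q : X × Dd X, q.2 ∈ T q.1 → F q ≤ ((q.2 q.1 : ℝ) : EReal)) (xs : Dd X) (x : X) :
    ((xs x : ℝ) : EReal) ≤ conj2 F (xs, x) := by
  by_contra! hlt
  simpa using apply_sub_le_conj2_of_mem hF (hT.mem_of_conj2_le hF hlt.le) xs x |>.trans_lt hlt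

end MaxMonotone

theorem attained_min_gives_solution_general
    (S T : X → Set (Dd X)) (hS : IsMaxMonotone S) (hT : IsMaxMonotone T)
    (p : X) (ps : Dd X)
    (FS FT : X × Dd X → EReal) (hFS : IsRepr S FS) (hFT : IsRepr T FT)
    (ub : X) (ubs : Dd X)
    (h : conj2 (fun q : X × Dd X => FS q + hatF FT (q.1 - p, q.2 - ps)) (ps, p)
        = conj2 FS (ps - ubs, p - ub) + conj2 (hatF FT) (ubs, ub)
          + ((ps ub + ubs p : ℝ) : EReal)) :
    conj2 FS (ps - ubs, p - ub) = (((ps - ubs) (p - ub) : ℝ) : EReal) ∧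
    conj2 (hatF FT) (ubs, ub) = ((-(ubs ub) : ℝ) : EReal) ∧
    ∃ s ∈ S (p - ub), ∃ t ∈ T (-ub), s + t = ps := by
  have hFS_graph : ∀ q : X × Dd X, q.2 ∈ S q.1 → FS q ≤ ((q.2 q.1 : ℝ) : EReal) :=
    fun q hq => (hFS.2.2.2 q hq).le
  have hFT_graph : ∀ q : X × Dd X, q.2 ∈ T q.1 → FT q ≤ ((q.2 q.1 : ℝ) : EReal) :=
    fun q hq => (hFT.2.2.2 q hq).le
  have hFT_conj : conj2 (hatF FT) (ubs, ub) = conj2 FT (ubs, -ub) := conj2_hatF FT ubs ub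
  have hS_lower := hS.apply_le_conj2 hFS_graph (ps - ubs) (p - ub)
  have hT_lower : ((-(ubs ub) : ℝ) : EReal) ≤ conj2 (hatF FT) (ubs, ub) := by
    rw [hFT_conj, ← map_neg]
    exact hT.apply_le_conj2 hFT_graph ubs (-ub)
  have hupper : conj2 FS (ps - ubs, p - ub) + conj2 (hatF FT) (ubs, ub)
        + ((ps ub + ubs p : ℝ) : EReal)
      ≤ (((ps - ubs) (p - ub) + -(ubs ub) + (ps ub + ubs p) : ℝ) : EReal) := by
    rw [← h]
    refine (conj2_add_hatF_sub_le hFS.2.2.1 hFT.2.2.1 p ps).trans_eq ?_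
    congr 1
    simp only [sub_apply, map_sub]
    ring
  obtain ⟨hS_eq, hT_eq⟩ := EReal.eq_coe_of_add_le hS_lower hT_lower hupper
  refine ⟨hS_eq, hT_eq, ps - ubs, hS.mem_of_conj2_le hFS_graph hS_eq.le, ubs,
    hT.mem_of_conj2_le hFT_graph ?_, sub_add_cancel ps ubs⟩
  rw [map_neg, ← hFT_conj]
  exact hT_eq.le

/-- if the conjugate of `f_S + f̂_T(· − p, · − p*)` at `(p*, p)` is attained
as indicated, then the two conjugate equalities hold and `p* ∈ S(p − ū) + T(−ū)`. -/
theorem attained_min_gives_solution [CompleteSpace X] (hX : Reflexive' X)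
    (S T : X → Set (Dd X)) (hS : IsMaxMonotone S) (hT : IsMaxMonotone T)
    (p : X) (ps : Dd X)
    (FS FT : X × Dd X → EReal) (hFS : IsRepr S FS) (hFT : IsRepr T FT)
    (ub : X) (ubs : Dd X)
    (h : conj2 (fun q : X × Dd X => FS q + hatF FT (q.1 - p, q.2 - ps)) (ps, p)
        = conj2 FS (ps - ubs, p - ub) + conj2 (hatF FT) (ubs, ub)
          + ((ps ub + ubs p : ℝ) : EReal)) :
    conj2 FS (ps - ubs, p - ub) = (((ps - ubs) (p - ub) : ℝ) : EReal) ∧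
    conj2 (hatF FT) (ubs, ub) = ((-(ubs ub) : ℝ) : EReal) ∧
    ∃ s ∈ S (p - ub), ∃ t ∈ T (-ub), s + t = ps :=
  attained_min_gives_solution_general S T hS hT p ps FS FT hFS hFT ub ubs h
end
end

section
/- Let X be a reflexive Banach space and S : X ⇉ X* maximal monotone. Then S is surjective (R(S) = X*) if and only if for every p* ∈ X* there exists a representative function f_S ∈ F_S such that the function y* ↦ −(f_S*(y*, ·))*(p*) is lower semicontinuous at p* and there exists x ∈ X with p* ∈ ∂(f_S*(p*, ·))(x). -/
noncomputable section

open scoped Topology Pointwise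

variable {X : Type*} [NormedAddCommGroup X] [NormedSpace ℝ X]

/-!
By convexity, a representative function `F` of `S` dominates the affine functions
`(x, x*) ↦ ⟨y*, x⟩ + ⟨x*, y⟩ - ⟨y*, y⟩` with `y* ∈ S y`, so `F*(y*, y) ≤ ⟨y*, y⟩` on the graph,
while `F = ⟨·,·⟩` on the graph gives the lower bound `F*(x*, x) ≥ ⟨x*, y⟩ + ⟨y*, x⟩ - ⟨y*, y⟩`.

If `p* ∈ S x₀`, these bounds make `F*(p*, ·) - ⟨p*, ·⟩` minimal at `x₀`, and
`Θ(y*) := -(F*(y*, ·))*(p*)` has the continuous minorant `⟨y* - p*, x₀⟩`, touching it at `p*`.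

Conversely, if `p* ∈ ∂F*(p*, ·)(x₀)` then `Θ(p*) = F*(p*, x₀) - ⟨p*, x₀⟩`. When this is `≤ 0`,
maximality gives `p* ∈ S x₀`. Otherwise `(p*, 0)` lies outside the closure of the epigraph of `Θ`,
which is convex as `Θ` is a marginal function of the jointly convex `F*`. A separating hyperplane in
`X* × ℝ` is non-vertical and, by reflexivity, given by some `x₁ ∈ X`; testing it on the epigraph
points `(y*, ⟨y* - p*, y⟩)`, `y* ∈ S y`, yields `⟨p* - y*, x₁ - y⟩ > 0`, so `p* ∈ S x₁`.
-/

theorem EConvexOn.iSup {E ι : Type*} [AddCommGroup E] [Module ℝ E] {f : ι → E → EReal}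
    (hf : ∀ i, EConvexOn (f i)) : EConvexOn fun x => ⨆ i, f i x := by
  intro x y a b ha hb hab
  refine iSup_le fun i => (hf i x y a b ha hb hab).trans ?_
  exact add_le_add
    (mul_le_mul_of_nonneg_left (le_iSup (fun i => f i x) i) (EReal.coe_nonneg.2 ha))
    (mul_le_mul_of_nonneg_left (le_iSup (fun i => f i y) i) (EReal.coe_nonneg.2 hb))

theorem econvexOn_coe_of_affine {E : Type*} [AddCommGroup E] [Module ℝ E] {f : E → ℝ}
    (hf : ∀ x y : E, ∀ a b : ℝ, a + b = 1 → f (a • x + b • y) = a * f x + b * f y) :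
    EConvexOn fun x => (f x : EReal) := by
  intro x y a b _ _ hab
  simp only [hf x y a b hab]
  norm_cast

theorem EReal.lt_coe_sub_comm {r c : ℝ} {g : EReal} :
    (c : EReal) < r - g ↔ g < ((r - c : ℝ) : EReal) := by
  induction g with
  | bot => exact iff_of_true (by simp) (EReal.bot_lt_coe _)
  | coe g => norm_cast; constructor <;> intro h <;> linarith
  | top => simp

theorem exists_le_of_neg_le_iSup_sub {ι : Type*} {φ : ι → ℝ} {g : ι → EReal} {s δ : ℝ}
    (h : -(s : EReal) ≤ ⨆ i, (φ i : EReal) - g i) (hδ : 0 < δ) :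
    ∃ i, g i ≤ ((φ i + s + δ : ℝ) : EReal) := by
  rw [← EReal.coe_neg] at h
  obtain ⟨i, hi⟩ := lt_iSup_iff.1 ((EReal.coe_lt_coe_iff.2 (by linarith : -s - δ < -s)).trans_le h)
  exact ⟨i, (EReal.lt_coe_sub_comm.1 hi).le.trans_eq (by ring_nf)⟩

theorem convex_epigraph_neg_iSup_sub {E Y : Type*} [AddCommGroup E] [Module ℝ E]
    [AddCommGroup Y] [Module ℝ Y] {G : E × Y → EReal} (hG : EConvexOn G) (ℓ : Y →ₗ[ℝ] ℝ) :
    Convex ℝ {p : E × ℝ | -(⨆ y, ((ℓ y : ℝ) : EReal) - G (p.1, y)) ≤ p.2} := by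
  rintro ⟨e₁, s⟩ h₁ ⟨e₂, t⟩ h₂ a b ha hb hab
  simp only [Set.mem_ofPred_eq, EReal.neg_le, Prod.smul_mk, Prod.mk_add_mk, smul_eq_mul] at h₁ h₂ ⊢
  refine EReal.ge_of_forall_gt_iff_ge.1 fun z hz => ?_
  set δ := -(a * s + b * t) - z
  have hδ : 0 < δ := by
    have := EReal.coe_lt_coe_iff.1 (hz.trans_eq (EReal.coe_neg _).symm)
    linarith
  obtain ⟨y₁, hy₁⟩ := exists_le_of_neg_le_iSup_sub h₁ hδ
  obtain ⟨y₂, hy₂⟩ := exists_le_of_neg_le_iSup_sub h₂ hδ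
  have hG₁₂ : G (a • e₁ + b • e₂, a • y₁ + b • y₂)
      ≤ ((a * (ℓ y₁ + s + δ) + b * (ℓ y₂ + t + δ) : ℝ) : EReal) := by
    refine (hG (e₁, y₁) (e₂, y₂) a b ha hb hab).trans ?_
    rw [EReal.coe_add, EReal.coe_mul, EReal.coe_mul]
    exact add_le_add (mul_le_mul_of_nonneg_left hy₁ (EReal.coe_nonneg.2 ha))
      (mul_le_mul_of_nonneg_left hy₂ (EReal.coe_nonneg.2 hb))
  refine le_iSup_of_le (a • y₁ + b • y₂) ((EReal.sub_le_sub le_rfl hG₁₂).trans' (le_of_eq ?_))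
  rw [← EReal.coe_sub, EReal.coe_eq_coe_iff, map_add, map_smul, map_smul, smul_eq_mul, smul_eq_mul]
  linear_combination -(z + a * s + b * t) * hab

theorem notMem_closure_epigraph_of_lowerSemicontinuousAt {E : Type*} [TopologicalSpace E]
    {f : E → EReal} {e : E} (hf : LowerSemicontinuousAt f e) {t : ℝ} (ht : (t : EReal) < f e) :
    (e, t) ∉ closure {p : E × ℝ | f p.1 ≤ p.2} := by
  obtain ⟨y, hty, hyf⟩ := EReal.lt_iff_exists_real_btwn.1 ht
  intro hmem
  obtain ⟨p, hp, hfp, hpy⟩ := ((mem_closure_iff_frequently.1 hmem).and_eventually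
    ((hf y hyf).prod_nhds (Iio_mem_nhds (EReal.coe_lt_coe_iff.1 hty)))).exists
  exact (hfp.trans_le hp).not_ge (EReal.coe_le_coe_iff.2 (le_of_lt hpy))

theorem exists_dual_lt_of_notMem_closure {E : Type*} [NormedAddCommGroup E] [NormedSpace ℝ E]
    {C : Set (E × ℝ)} (hC : Convex ℝ C) {e : E} (he : (e, (0 : ℝ)) ∉ closure C) {t : ℝ}
    (ht : 0 < t) (het : (e, t) ∈ C) : ∃ φ : StrongDual ℝ E, ∀ p ∈ C, φ p.1 - p.2 < φ e := by
  obtain ⟨f, u, hfC, hu⟩ := geometric_hahn_banach_closed_point hC.closure isClosed_closure he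
  have hf : ∀ p : E × ℝ, f p = f (p.1, 0) + p.2 * f (0, 1) := fun p => by
    rw [← smul_eq_mul, ← map_smul, ← map_add]; simp
  have hlt : ∀ p ∈ C, f (p.1, 0) + p.2 * f (0, 1) < f (e, 0) := fun p hp =>
    (hf p ▸ hfC p (subset_closure hp)).trans hu
  -- The hyperplane is not vertical because `C` contains `(e, t)` with `t > 0`.
  have hc : 0 < -f (0, 1) := by nlinarith [hlt _ het]
  refine ⟨(-f (0, 1))⁻¹ • f.comp (ContinuousLinearMap.inl ℝ E ℝ), fun p hp => ?_⟩
  simp only [smul_apply, ContinuousLinearMap.comp_apply,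
    ContinuousLinearMap.inl_apply, smul_eq_mul]
  calc (-f (0, 1))⁻¹ * f (p.1, 0) - p.2 = (-f (0, 1))⁻¹ * (f (p.1, 0) + p.2 * f (0, 1)) := by
        field_simp [neg_ne_zero.1 hc.ne']
        ring
    _ < (-f (0, 1))⁻¹ * f (e, 0) := mul_lt_mul_of_pos_left (hlt p hp) (inv_pos.2 hc)

theorem LowerSemicontinuousAt.of_minorant {α β : Type*} [TopologicalSpace α] [Preorder β]
    {f g : α → β} {x : α} (hg : LowerSemicontinuousAt g x) (hgf : g ≤ f) (hfx : f x ≤ g x) :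
    LowerSemicontinuousAt f x :=
  fun y hy => (hg y (hy.trans_le hfx)).mono fun _ hz => hz.trans_le (hgf _)

theorem conj1_eq_of_mem_esubdiff {g : X → EReal} {x : X} {xs : Dd X} (h : xs ∈ esubdiff g x) :
    conj1 g xs = ((xs x : ℝ) : EReal) - g x := by
  refine le_antisymm (iSup_le fun y => ?_) (le_iSup (fun y => ((xs y : ℝ) : EReal) - g y) x)
  lift g x to ℝ using ⟨h.1, h.2.1⟩ with γ hγ
  refine (EReal.sub_le_sub le_rfl (h.2.2 y)).trans_eq ?_
  rw [← hγ, ← EReal.coe_add, ← EReal.coe_sub, ← EReal.coe_sub, map_sub]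
  ring_nf

section Fitzpatrick

variable {S : X → Set (Dd X)}

theorem coe_le_fitz_of_mem {y : X} {ys : Dd X} (hys : ys ∈ S y) (p : X × Dd X) :
    ((ys p.1 + p.2 y - ys y : ℝ) : EReal) ≤ fitz S p :=
  le_iSup (fun q : {q : X × Dd X // q.2 ∈ S q.1} =>
    ((q.1.2 p.1 + p.2 q.1.1 - q.1.2 q.1.1 : ℝ) : EReal)) ⟨(y, ys), hys⟩

theorem coe_le_fitz (hS : IsMaxMonotone S) (p : X × Dd X) : ((p.2 p.1 : ℝ) : EReal) ≤ fitz S p := by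
  by_contra! h
  have hp : p.2 ∈ S p.1 := hS.2 _ _ fun y ys hys => by
    have := EReal.coe_lt_coe_iff.1 ((coe_le_fitz_of_mem hys p).trans_lt h)
    simp only [sub_apply, map_sub]
    linarith
  simpa using (coe_le_fitz_of_mem hp p).trans_lt h

theorem fitz_le_of_mem (hS : IsMonotoneOp S) {p : X × Dd X} (hp : p.2 ∈ S p.1) :
    fitz S p ≤ p.2 p.1 := iSup_le fun ⟨q, hq⟩ => by
  have := hS hq hp
  simp only [sub_apply, map_sub] at this
  exact EReal.coe_le_coe_iff.2 (by linarith)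

theorem isRepr_fitz (hS : IsMaxMonotone S) : IsRepr S (fitz S) := by
  refine ⟨EConvexOn.iSup fun q => econvexOn_coe_of_affine fun p p' a b hab => ?_,
    lowerSemicontinuous_iSup fun q => (continuous_coe_real_ereal.comp ?_).lowerSemicontinuous,
    coe_le_fitz hS,
    fun p hp => le_antisymm (fitz_le_of_mem hS.1 hp) (coe_le_fitz hS p)⟩
  · simp only [Prod.fst_add, Prod.snd_add, Prod.smul_fst, Prod.smul_snd, map_add, map_smul,
      add_apply, smul_apply, smul_eq_mul]
    linear_combination q.1.2 q.1.1 * hab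
  · fun_prop

end Fitzpatrick

theorem econvexOn_conj2 {F : X × Dd X → EReal} (hF : ∀ q, F q ≠ ⊥) : EConvexOn (conj2 F) :=
  EConvexOn.iSup fun q => by
    rcases eq_top_or_lt_top (F q) with htop | hlt
    · intro _ _ _ _ _ _ _
      simp [htop]
    · lift F q to ℝ using ⟨hlt.ne, hF q⟩ with r
      simp_rw [← EReal.coe_sub]
      refine econvexOn_coe_of_affine fun p p' a b hab => ?_
      simp only [Prod.fst_add, Prod.snd_add, Prod.smul_fst, Prod.smul_snd, map_add, map_smul,
        add_apply, smul_apply, smul_eq_mul]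
      linear_combination r * hab

namespace IsRepr

variable {S : X → Set (Dd X)} {F : X × Dd X → EReal}

theorem ne_bot (hF : IsRepr S F) (q : X × Dd X) : F q ≠ ⊥ :=
  ne_bot_of_le_ne_bot (EReal.coe_ne_bot _) (hF.2.2.1 q)

theorem coe_le_of_mem (hF : IsRepr S F) {y : X} {ys : Dd X} (hys : ys ∈ S y) (q : X × Dd X) :
    ((ys q.1 + q.2 y - ys y : ℝ) : EReal) ≤ F q := by
  rcases eq_top_or_lt_top (F q) with htop | hlt
  · simp [htop]
  lift F q to ℝ using ⟨hlt.ne, hF.ne_bot q⟩ with r hr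
  set a := q.2 q.1
  set b := ys q.1 + q.2 y
  set c := ys y
  -- On the segment from `(y, ys)` to `q`, `F` is at most affine in `t` while the pairing is
  -- quadratic; divide by `t` and let `t → 0`.
  have key : ∀ t ∈ Set.Ioo (0 : ℝ) 1, (1 - t) * (b - c) + t * a ≤ r := by
    rintro t ⟨ht₀, ht₁⟩
    have hconv := hF.1 q (y, ys) t (1 - t) ht₀.le (by linarith) (by ring)
    rw [← hr, hF.2.2.2 (y, ys) hys] at hconv
    have hpair := (hF.2.2.1 _).trans hconv
    have hval : (t • q + (1 - t) • (y, ys)).2 (t • q + (1 - t) • (y, ys)).1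
        = t * t * a + t * (1 - t) * b + (1 - t) * (1 - t) * c := by
      simp only [Prod.smul_fst, Prod.smul_snd, Prod.fst_add, Prod.snd_add,
        add_apply, smul_apply, map_add, map_smul,
        smul_eq_mul, a, b, c]
      ring
    rw [hval, ← EReal.coe_mul, ← EReal.coe_mul, ← EReal.coe_add, EReal.coe_le_coe_iff] at hpair
    nlinarith
  have hlim : Filter.Tendsto (fun t : ℝ => (1 - t) * (b - c) + t * a) (𝓝[>] 0) (𝓝 (b - c)) := by
    simpa using ((by fun_prop : Continuous fun t : ℝ => (1 - t) * (b - c) + t * a).tendsto 0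
      ).mono_left nhdsWithin_le_nhds
  have := le_of_tendsto hlim (Filter.eventually_of_mem (Ioo_mem_nhdsGT one_pos) key)
  exact EReal.coe_le_coe_iff.2 (by simp only [b, c] at this; linarith)

theorem conj2_le_of_mem (hF : IsRepr S F) {y : X} {ys : Dd X} (hys : ys ∈ S y) :
    conj2 F (ys, y) ≤ ys y := iSup_le fun q =>
  (EReal.sub_le_sub le_rfl (hF.coe_le_of_mem hys q)).trans_eq (by
    rw [← EReal.coe_sub]; ring_nf)

theorem coe_le_conj2_of_mem (hF : IsRepr S F) {y : X} {ys : Dd X} (hys : ys ∈ S y)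
    (xs : Dd X) (x : X) : ((xs y + ys x - ys y : ℝ) : EReal) ≤ conj2 F (xs, x) := by
  refine le_iSup_of_le (y, ys) ?_
  rw [hF.2.2.2 (y, ys) hys, ← EReal.coe_sub]

theorem conj2_eq_of_mem (hF : IsRepr S F) {x : X} {xs : Dd X} (h : xs ∈ S x) :
    conj2 F (xs, x) = xs x :=
  (hF.conj2_le_of_mem h).antisymm (by simpa using hF.coe_le_conj2_of_mem h xs x)

theorem mem_of_conj2_le (hS : IsMaxMonotone S) (hF : IsRepr S F) {x : X} {xs : Dd X}
    (h : conj2 F (xs, x) ≤ xs x) : xs ∈ S x := hS.2 x xs fun y ys hys => by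
  have := EReal.coe_le_coe_iff.1 ((hF.coe_le_conj2_of_mem hys xs x).trans h)
  simp only [sub_apply, map_sub]
  linarith

theorem mem_esubdiff_conj2_of_mem (hF : IsRepr S F) {x : X} {xs : Dd X} (h : xs ∈ S x) :
    xs ∈ esubdiff (fun y => conj2 F (xs, y)) x := by
  refine ⟨?_, ?_, fun y => ?_⟩ <;> dsimp only <;> rw [hF.conj2_eq_of_mem h]
  · exact EReal.coe_ne_top _
  · exact EReal.coe_ne_bot _
  · refine le_of_eq_of_le ?_ (hF.coe_le_conj2_of_mem h xs y)
    rw [← EReal.coe_add, map_sub]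
    ring_nf

theorem lowerSemicontinuousAt_of_mem (hF : IsRepr S F) {x : X} {xs : Dd X} (h : xs ∈ S x) :
    LowerSemicontinuousAt (fun ys => -conj1 (fun y => conj2 F (ys, y)) xs) xs := by
  refine LowerSemicontinuousAt.of_minorant (g := fun ys => ((ys x - xs x : ℝ) : EReal))
    ((continuous_coe_real_ereal.comp (by fun_prop)).lowerSemicontinuous xs) (fun ys => ?_) ?_
  · refine EReal.le_neg.1 (iSup_le fun y => ?_)
    refine (EReal.sub_le_sub le_rfl (hF.coe_le_conj2_of_mem h ys y)).trans_eq ?_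
    rw [← EReal.coe_sub, ← EReal.coe_neg]
    ring_nf
  · refine EReal.neg_le.1 (le_iSup_of_le x ?_)
    dsimp only
    rw [hF.conj2_eq_of_mem h]
    simp

theorem exists_mem_of_neg_conj1_eq_pos (hX : Reflexive' X) (hS : IsMaxMonotone S) (hF : IsRepr S F)
    {xs : Dd X} (hlsc : LowerSemicontinuousAt (fun ys => -conj1 (fun y => conj2 F (ys, y)) xs) xs)
    {t : ℝ} (ht : 0 < t) (hΘ : -conj1 (fun y => conj2 F (xs, y)) xs = t) : ∃ x, xs ∈ S x := by
  obtain ⟨φ, hφ⟩ := exists_dual_lt_of_notMem_closure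
    (convex_epigraph_neg_iSup_sub (econvexOn_conj2 hF.ne_bot) xs)
    (notMem_closure_epigraph_of_lowerSemicontinuousAt hlsc (hΘ ▸ EReal.coe_pos.2 ht)) ht hΘ.le
  obtain ⟨x, rfl⟩ := hX φ
  refine ⟨x, hS.2 x xs fun y ys hys => ?_⟩
  have hmem : -conj1 (fun y => conj2 F (ys, y)) xs ≤ ((ys y - xs y : ℝ) : EReal) := by
    refine EReal.neg_le.1 (le_iSup_of_le y ?_)
    refine (EReal.sub_le_sub le_rfl (hF.conj2_le_of_mem hys)).trans_eq' ?_
    rw [← EReal.coe_sub, ← EReal.coe_neg]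
    ring_nf
  have := hφ (ys, ys y - xs y) hmem
  simp only [NormedSpace.dual_def] at this
  simp only [sub_apply, map_sub]
  linarith

theorem exists_mem_of_mem_esubdiff (hX : Reflexive' X) (hS : IsMaxMonotone S)
    (hF : IsRepr S F) {xs : Dd X}
    (hlsc : LowerSemicontinuousAt (fun ys => -conj1 (fun y => conj2 F (ys, y)) xs) xs)
    {x : X} (hsub : xs ∈ esubdiff (fun y => conj2 F (xs, y)) x) : ∃ x, xs ∈ S x := by
  have hval := conj1_eq_of_mem_esubdiff hsub
  lift conj2 F (xs, x) to ℝ using ⟨hsub.1, hsub.2.1⟩ with γ hγ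
  by_cases hγx : γ ≤ xs x
  · exact ⟨x, hF.mem_of_conj2_le hS (hγ ▸ EReal.coe_le_coe_iff.2 hγx)⟩
  · have hΘ : -conj1 (fun y => conj2 F (xs, y)) xs = ((γ - xs x : ℝ) : EReal) := by
      rw [hval, ← EReal.coe_sub, ← EReal.coe_neg, neg_sub]
    exact hF.exists_mem_of_neg_conj1_eq_pos hX hS hlsc (by linarith) hΘ

end IsRepr

theorem surjective_iff_repr_condition_general (hX : Reflexive' X)
    (S : X → Set (Dd X)) (hS : IsMaxMonotone S) :
    (∀ ps : Dd X, ∃ x : X, ps ∈ S x) ↔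
    (∀ ps : Dd X, ∃ F : X × Dd X → EReal, IsRepr S F ∧
      LowerSemicontinuousAt
        (fun ys : Dd X => -(⨆ x : X, ((ps x : ℝ) : EReal) - conj2 F (ys, x))) ps ∧
      ∃ x : X, ps ∈ esubdiff (fun y : X => conj2 F (ps, y)) x) := by
  constructor
  · intro hsurj ps
    obtain ⟨x, hx⟩ := hsurj ps
    have hF := isRepr_fitz hS
    exact ⟨fitz S, hF, hF.lowerSemicontinuousAt_of_mem hx, x, hF.mem_esubdiff_conj2_of_mem hx⟩
  · rintro h ps
    obtain ⟨F, hF, hlsc, x, hx⟩ := h ps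
    exact hF.exists_mem_of_mem_esubdiff hX hS hlsc hx

/-- characterization of surjectivity of a maximal monotone operator via
its representative functions. -/
theorem surjective_iff_repr_condition [CompleteSpace X] (hX : Reflexive' X)
    (S : X → Set (Dd X)) (hS : IsMaxMonotone S) :
    (∀ ps : Dd X, ∃ x : X, ps ∈ S x) ↔
    (∀ ps : Dd X, ∃ F : X × Dd X → EReal, IsRepr S F ∧
      LowerSemicontinuousAt
        (fun ys : Dd X => -(⨆ x : X, ((ps x : ℝ) : EReal) - conj2 F (ys, x))) ps ∧
      ∃ x : X, ps ∈ esubdiff (fun y : X => conj2 F (ps, y)) x) :=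
  surjective_iff_repr_condition_general hX S hS
end
end
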